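/- Let u₁¹ : (k₀, 1) → (π/2, π) be a differentiable function satisfying f_u(u₁¹(k), k) = 0, where f_u(u,k) = sin u·√(1 − k² sin² u) − cos u·(2E(u,k) − F(u,k)). Then u₁¹ is strictly decreasing, and lim_{k→1⁻} u₁¹(k) = π/2. -/

import Mathlib

/-!
On `(π/2, π)` the zeros of `f_u` are those of
`h = ellH = -f_u / cos u = 2E - F - tan u √(1 - k² sin² u)`.
This `h` is strictly decreasing in `u`, since `∂h/∂u = -√(1 - k² sin² u) tan² u`, and strictly
decreasing in `k`, since `E` decreases and `F` increases with `k²`. Hence for `k < k'`,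
`h(u₁(k'), k) > h(u₁(k'), k') = 0 = h(u₁(k), k)` forces `u₁(k') < u₁(k)`.

For the limit fix `L ∈ (π/2, π)`: `h(L, k) ≤ 2L - tan L - F(π/2, k)`, and the comparison
`1 - k² sin² t ≤ (1 - k²) + (π/2 - t)²` gives `F(π/2, k) ≥ arsinh (π / (2√(1 - k²))) → ∞`.
So eventually `h(L, k) < 0 = h(u₁(k), k)`, i.e. `u₁(k) < L`.
-/

open intervalIntegral Filter

/-- Incomplete elliptic integral of the first kind. -/
noncomputable def ellF (u k : ℝ) : ℝ :=
  ∫ t in (0:ℝ)..u, 1 / Real.sqrt (1 - k ^ 2 * Real.sin t ^ 2)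

/-- Incomplete elliptic integral of the second kind. -/
noncomputable def ellE (u k : ℝ) : ℝ :=
  ∫ t in (0:ℝ)..u, Real.sqrt (1 - k ^ 2 * Real.sin t ^ 2)

/-- The function `f_u(u,k) = sin u·√(1 − k² sin²u) − cos u·(2E(u,k) − F(u,k))`. -/
noncomputable def fu (u k : ℝ) : ℝ :=
  Real.sin u * Real.sqrt (1 - k ^ 2 * Real.sin u ^ 2)
    - Real.cos u * (2 * ellE u k - ellF u k)

open Real Set Topology

section Integrands

variable {k : ℝ}

lemma one_sub_sq_mul_sin_sq_pos (hk : k ^ 2 < 1) (t : ℝ) : 0 < 1 - k ^ 2 * sin t ^ 2 := by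
  nlinarith [sin_sq_le_one t, sq_nonneg k, sq_nonneg (sin t)]

lemma continuous_sqrt_one_sub_sq_mul_sin_sq (k : ℝ) :
    Continuous fun t => √(1 - k ^ 2 * sin t ^ 2) := by
  fun_prop

lemma continuous_one_div_sqrt_one_sub_sq_mul_sin_sq (hk : k ^ 2 < 1) :
    Continuous fun t => 1 / √(1 - k ^ 2 * sin t ^ 2) :=
  continuous_const.div (continuous_sqrt_one_sub_sq_mul_sin_sq k) fun t =>
    (sqrt_pos.2 (one_sub_sq_mul_sin_sq_pos hk t)).ne'

lemma sqrt_one_sub_sq_mul_sin_sq_le_one (k t : ℝ) : √(1 - k ^ 2 * sin t ^ 2) ≤ 1 :=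
  sqrt_le_one.2 (by nlinarith [sq_nonneg (k * sin t)])

end Integrands

lemma hasDerivAt_ellE (k u : ℝ) : HasDerivAt (ellE · k) (√(1 - k ^ 2 * sin u ^ 2)) u :=
  integral_hasDerivAt_right ((continuous_sqrt_one_sub_sq_mul_sin_sq k).intervalIntegrable 0 u)
    ((continuous_sqrt_one_sub_sq_mul_sin_sq k).stronglyMeasurableAtFilter _ _)
    (continuous_sqrt_one_sub_sq_mul_sin_sq k).continuousAt

lemma hasDerivAt_ellF {k : ℝ} (hk : k ^ 2 < 1) (u : ℝ) :
    HasDerivAt (ellF · k) (1 / √(1 - k ^ 2 * sin u ^ 2)) u :=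
  integral_hasDerivAt_right
    ((continuous_one_div_sqrt_one_sub_sq_mul_sin_sq hk).intervalIntegrable 0 u)
    ((continuous_one_div_sqrt_one_sub_sq_mul_sin_sq hk).stronglyMeasurableAtFilter _ _)
    (continuous_one_div_sqrt_one_sub_sq_mul_sin_sq hk).continuousAt

lemma ellE_le_self {u : ℝ} (hu : 0 ≤ u) (k : ℝ) : ellE u k ≤ u := by
  have h : ellE u k ≤ ∫ _ in (0:ℝ)..u, (1:ℝ) :=
    integral_mono_on hu ((continuous_sqrt_one_sub_sq_mul_sin_sq k).intervalIntegrable 0 u)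
      intervalIntegrable_const fun t _ => sqrt_one_sub_sq_mul_sin_sq_le_one k t
  simpa using h

lemma ellE_anti_of_sq_le {u k k' : ℝ} (hu : 0 ≤ u) (hkk' : k ^ 2 ≤ k' ^ 2) :
    ellE u k' ≤ ellE u k :=
  integral_mono_on hu ((continuous_sqrt_one_sub_sq_mul_sin_sq k').intervalIntegrable 0 u)
    ((continuous_sqrt_one_sub_sq_mul_sin_sq k).intervalIntegrable 0 u) fun t _ =>
      sqrt_le_sqrt (by nlinarith [sq_nonneg (sin t)])

lemma ellF_mono_of_sq_le {u k k' : ℝ} (hu : 0 ≤ u) (hkk' : k ^ 2 ≤ k' ^ 2) (hk' : k' ^ 2 < 1) :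
    ellF u k ≤ ellF u k' :=
  integral_mono_on hu
    ((continuous_one_div_sqrt_one_sub_sq_mul_sin_sq (hkk'.trans_lt hk')).intervalIntegrable 0 u)
    ((continuous_one_div_sqrt_one_sub_sq_mul_sin_sq hk').intervalIntegrable 0 u) fun t _ =>
      one_div_le_one_div_of_le (sqrt_pos.2 (one_sub_sq_mul_sin_sq_pos hk' t))
        (sqrt_le_sqrt (by nlinarith [sq_nonneg (sin t)]))

lemma ellF_monotone {k : ℝ} (hk : k ^ 2 < 1) : Monotone (ellF · k) :=
  monotone_of_deriv_nonneg (fun u => (hasDerivAt_ellF hk u).differentiableAt) fun u => by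
    rw [(hasDerivAt_ellF hk u).deriv]
    positivity

lemma integral_one_div_sqrt_sq_add_sq {c : ℝ} (hc : 0 < c) (a : ℝ) :
    ∫ x in (0:ℝ)..a, 1 / √(c ^ 2 + x ^ 2) = arsinh (a / c) := by
  have hderiv : ∀ x, HasDerivAt (fun x => arsinh (x / c)) (1 / √(c ^ 2 + x ^ 2)) x := by
    intro x
    refine ((hasDerivAt_id x).div_const c).arsinh.congr_deriv ?_
    rw [id, smul_eq_mul, show 1 + (x / c) ^ 2 = (c ^ 2 + x ^ 2) / c ^ 2 by field_simp,
      sqrt_div' _ (sq_nonneg c), sqrt_sq hc.le]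
    have : 0 < √(c ^ 2 + x ^ 2) := sqrt_pos.2 (by positivity)
    field_simp
  have hcont : Continuous fun x => 1 / √(c ^ 2 + x ^ 2) :=
    continuous_const.div (by fun_prop) fun x => (sqrt_pos.2 (by positivity)).ne'
  rw [integral_eq_sub_of_hasDerivAt (fun x _ => hderiv x) (hcont.intervalIntegrable _ _)]
  simp

lemma arsinh_le_ellF_pi_div_two {k : ℝ} (hk : k ^ 2 < 1) :
    arsinh (π / 2 / √(1 - k ^ 2)) ≤ ellF (π / 2) k := by
  set c := √(1 - k ^ 2)
  have hc : 0 < c := sqrt_pos.2 (by linarith)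
  have hc2 : c ^ 2 = 1 - k ^ 2 := sq_sqrt (by linarith)
  have hcomparison : ∫ t in (0:ℝ)..π / 2, 1 / √(c ^ 2 + (π / 2 - t) ^ 2) ≤ ellF (π / 2) k := by
    refine integral_mono_on (by positivity) (Continuous.intervalIntegrable ?_ _ _)
      ((continuous_one_div_sqrt_one_sub_sq_mul_sin_sq hk).intervalIntegrable _ _) fun t _ => ?_
    · exact continuous_const.div (by fun_prop) fun t => (sqrt_pos.2 (by positivity)).ne'
    refine one_div_le_one_div_of_le (sqrt_pos.2 (one_sub_sq_mul_sin_sq_pos hk t))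
      (sqrt_le_sqrt ?_)
    -- `1 - k² sin² t = c² + k² cos² t` and `|cos t| = |sin (π/2 - t)| ≤ |π/2 - t|`
    have hcos : cos t ^ 2 ≤ (π / 2 - t) ^ 2 := by
      simpa only [sin_pi_div_two_sub] using sin_sq_le_sq (x := π / 2 - t)
    nlinarith [sin_sq_add_cos_sq t, sq_nonneg (cos t)]
  have hshift : ∫ t in (0:ℝ)..π / 2, 1 / √(c ^ 2 + (π / 2 - t) ^ 2) = arsinh (π / 2 / c) := by
    rw [integral_comp_sub_left (fun x => 1 / √(c ^ 2 + x ^ 2)), sub_self,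
      sub_zero, integral_one_div_sqrt_sq_add_sq hc]
  exact hshift ▸ hcomparison

lemma tendsto_ellF_pi_div_two : Tendsto (ellF (π / 2)) (𝓝[<] 1) atTop := by
  have hsqrt : Tendsto (fun k : ℝ => √(1 - k ^ 2)) (𝓝[<] 1) (𝓝[>] 0) := by
    refine tendsto_nhdsWithin_iff.2 ⟨?_, ?_⟩
    · have h : Tendsto (fun k : ℝ => √(1 - k ^ 2)) (𝓝 1) (𝓝 √(1 - 1 ^ 2)) :=
        (continuous_const.sub (continuous_pow 2)).sqrt.tendsto 1
      simpa using h.mono_left nhdsWithin_le_nhds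
    · filter_upwards [Ioo_mem_nhdsLT (neg_one_lt_zero.trans one_pos)] with k hk
      exact sqrt_pos.2 (by nlinarith [hk.1, hk.2])
  have hbound : Tendsto (fun k : ℝ => arsinh (π / 2 / √(1 - k ^ 2))) (𝓝[<] 1) atTop :=
    sinhOrderIso.symm.tendsto_atTop.comp
      ((tendsto_inv_nhdsGT_zero.const_mul_atTop (by positivity)).comp hsqrt)
  refine tendsto_atTop_mono' _ ?_ hbound
  filter_upwards [Ioo_mem_nhdsLT (neg_one_lt_zero.trans one_pos)] with k hk
  exact arsinh_le_ellF_pi_div_two (by nlinarith [hk.1, hk.2])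

noncomputable def ellH (u k : ℝ) : ℝ :=
  2 * ellE u k - ellF u k - tan u * √(1 - k ^ 2 * sin u ^ 2)

lemma fu_eq_neg_cos_mul_ellH {u : ℝ} (hu : cos u ≠ 0) (k : ℝ) : fu u k = -cos u * ellH u k := by
  rw [fu, ellH, tan_eq_sin_div_cos]
  field_simp
  ring

lemma hasDerivAt_ellH {k u : ℝ} (hk : k ^ 2 < 1) (hu : cos u ≠ 0) :
    HasDerivAt (ellH · k) (-(√(1 - k ^ 2 * sin u ^ 2) * tan u ^ 2)) u := by
  have hpos := one_sub_sq_mul_sin_sq_pos hk u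
  have hsqrt : HasDerivAt (fun v => √(1 - k ^ 2 * sin v ^ 2))
      (-(k ^ 2 * (2 * sin u * cos u)) / (2 * √(1 - k ^ 2 * sin u ^ 2))) u := by
    have hsin_sq : HasDerivAt (fun v => sin v ^ 2) (2 * sin u * cos u) u := by
      simpa [mul_comm, pow_two] using (hasDerivAt_sin u).fun_pow 2
    exact HasDerivAt.sqrt (by simpa using (hsin_sq.const_mul (k ^ 2)).const_sub 1) hpos.ne'
  refine ((((hasDerivAt_ellE k u).const_mul 2).sub (hasDerivAt_ellF hk u)).sub
    ((hasDerivAt_tan hu).mul hsqrt)).congr_deriv ?_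
  have hS2 : √(1 - k ^ 2 * sin u ^ 2) ^ 2 = 1 - k ^ 2 * sin u ^ 2 := sq_sqrt hpos.le
  rw [tan_eq_sin_div_cos]
  field_simp
  linear_combination cos u ^ 2 * hS2 + √(1 - k ^ 2 * sin u ^ 2) ^ 2 * sin_sq_add_cos_sq u

section SecondQuadrant

variable {u : ℝ}

lemma cos_neg_of_mem_Ioo (hu : u ∈ Ioo (π / 2) π) : cos u < 0 :=
  cos_neg_of_pi_div_two_lt_of_lt hu.1 (by linarith [hu.2, pi_pos])

lemma tan_neg_of_mem_Ioo (hu : u ∈ Ioo (π / 2) π) : tan u < 0 := by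
  rw [tan_eq_sin_div_cos]
  exact div_neg_of_pos_of_neg (sin_pos_of_pos_of_lt_pi (by linarith [hu.1, pi_pos]) hu.2)
    (cos_neg_of_mem_Ioo hu)

lemma fu_eq_zero_iff_ellH_eq_zero (hu : u ∈ Ioo (π / 2) π) (k : ℝ) :
    fu u k = 0 ↔ ellH u k = 0 := by
  rw [fu_eq_neg_cos_mul_ellH (cos_neg_of_mem_Ioo hu).ne, mul_eq_zero,
    neg_eq_zero, or_iff_right (cos_neg_of_mem_Ioo hu).ne]

lemma ellH_strictAntiOn {k : ℝ} (hk : k ^ 2 < 1) : StrictAntiOn (ellH · k) (Ioo (π / 2) π) := by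
  refine strictAntiOn_of_hasDerivWithinAt_neg (convex_Ioo _ _)
    (f' := fun v => -(√(1 - k ^ 2 * sin v ^ 2) * tan v ^ 2)) (fun v hv => ?_)
    (fun v hv => ?_) fun v hv => ?_
  · exact (hasDerivAt_ellH hk (cos_neg_of_mem_Ioo hv).ne).continuousAt.continuousWithinAt
  · rw [interior_Ioo] at hv
    exact (hasDerivAt_ellH hk (cos_neg_of_mem_Ioo hv).ne).hasDerivWithinAt
  · rw [interior_Ioo] at hv
    have hS := sqrt_pos.2 (one_sub_sq_mul_sin_sq_pos hk v)
    have htan := pow_pos (neg_pos.2 (tan_neg_of_mem_Ioo hv)) 2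
    nlinarith

lemma ellH_lt_of_sq_lt (hu : u ∈ Ioo (π / 2) π) {k k' : ℝ} (hkk' : k ^ 2 < k' ^ 2)
    (hk' : k' ^ 2 < 1) : ellH u k' < ellH u k := by
  have hu0 : 0 ≤ u := by linarith [hu.1, pi_pos]
  have hsqrt : √(1 - k' ^ 2 * sin u ^ 2) < √(1 - k ^ 2 * sin u ^ 2) := by
    have hsin : 0 < sin u := sin_pos_of_pos_of_lt_pi (by linarith [hu.1, pi_pos]) hu.2
    exact sqrt_lt_sqrt (one_sub_sq_mul_sin_sq_pos hk' u).le
      (by nlinarith [mul_pos (sub_pos.2 hkk') (mul_pos hsin hsin)])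
  have htan := tan_neg_of_mem_Ioo hu
  have hE := ellE_anti_of_sq_le (u := u) hu0 hkk'.le
  have hF := ellF_mono_of_sq_le (u := u) hu0 hkk'.le hk'
  unfold ellH
  nlinarith [mul_lt_mul_of_neg_left hsqrt htan]

lemma tendsto_ellH_atBot (hu : u ∈ Ioo (π / 2) π) : Tendsto (ellH u) (𝓝[<] 1) atBot := by
  have hbound : Tendsto (fun k => 2 * u - tan u + -ellF (π / 2) k) (𝓝[<] 1) atBot :=
    tendsto_atBot_add_const_left _ _ (tendsto_neg_atTop_atBot.comp tendsto_ellF_pi_div_two)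
  refine tendsto_atBot_mono' _ ?_ hbound
  filter_upwards [Ioo_mem_nhdsLT (neg_one_lt_zero.trans one_pos)] with k hk
  have hk2 : k ^ 2 < 1 := by nlinarith [hk.1, hk.2]
  have hE := ellE_le_self (u := u) (by linarith [hu.1, pi_pos]) k
  have hF := ellF_monotone hk2 hu.1.le
  have htan := mul_le_mul_of_nonpos_left (sqrt_one_sub_sq_mul_sin_sq_le_one k u)
    (tan_neg_of_mem_Ioo hu).le
  unfold ellH
  linarith

end SecondQuadrant

theorem u11_decreasing_and_limit_general
    (k₀ : ℝ) (hk₀ : k₀ ∈ Set.Ioo (0:ℝ) 1)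
    (u₁ : ℝ → ℝ)
    (hmaps : ∀ k ∈ Set.Ioo k₀ 1, u₁ k ∈ Set.Ioo (Real.pi / 2) Real.pi)
    (hroot : ∀ k ∈ Set.Ioo k₀ 1, fu (u₁ k) k = 0) :
    StrictAntiOn u₁ (Set.Ioo k₀ 1) ∧
      Tendsto u₁ (nhdsWithin 1 (Set.Iio 1)) (nhds (Real.pi / 2)) := by
  have hsq : ∀ k ∈ Ioo k₀ 1, k ^ 2 < 1 := fun k hk => by nlinarith [hk₀.1, hk.1, hk.2]
  have hzero : ∀ k ∈ Ioo k₀ 1, ellH (u₁ k) k = 0 := fun k hk =>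
    (fu_eq_zero_iff_ellH_eq_zero (hmaps k hk) k).1 (hroot k hk)
  refine ⟨fun k hk k' hk' hkk' => ?_, tendsto_order.2 ⟨fun a ha => ?_, fun b hb => ?_⟩⟩
  · have hlt := ellH_lt_of_sq_lt (hmaps k' hk') (k := k) (by nlinarith [hk₀.1, hk.1]) (hsq k' hk')
    rw [hzero k' hk', ← hzero k hk] at hlt
    exact ((ellH_strictAntiOn (hsq k hk)).lt_iff_gt (hmaps k hk) (hmaps k' hk')).1 hlt
  · filter_upwards [Ioo_mem_nhdsLT hk₀.2] with k hk
    exact ha.trans (hmaps k hk).1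
  · obtain ⟨L, hL, hLb⟩ := exists_between (lt_min hb (half_lt_self pi_pos))
    have hLmem : L ∈ Ioo (π / 2) π := ⟨hL, hLb.trans_le (min_le_right _ _)⟩
    filter_upwards [Ioo_mem_nhdsLT hk₀.2, (tendsto_ellH_atBot hLmem).eventually_lt_atBot 0]
      with k hk hneg
    rw [← hzero k hk] at hneg
    exact (((ellH_strictAntiOn (hsq k hk)).lt_iff_gt hLmem (hmaps k hk)).1 hneg).trans
      (hLb.trans_le (min_le_left _ _))

/-- Let `u₁¹ : (k₀, 1) → (π/2, π)` be a differentiable function satisfying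
`f_u(u₁¹(k), k) = 0`. Then `u₁¹` is strictly decreasing on `(k₀, 1)` and
`u₁¹(k) → π/2` as `k → 1⁻`. -/
theorem u11_decreasing_and_limit
    (k₀ : ℝ) (hk₀ : k₀ ∈ Set.Ioo (0:ℝ) 1)
    (u₁ : ℝ → ℝ)
    (hmaps : ∀ k ∈ Set.Ioo k₀ 1, u₁ k ∈ Set.Ioo (Real.pi / 2) Real.pi)
    (hdiff : DifferentiableOn ℝ u₁ (Set.Ioo k₀ 1))
    (hroot : ∀ k ∈ Set.Ioo k₀ 1, fu (u₁ k) k = 0) :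
    StrictAntiOn u₁ (Set.Ioo k₀ 1) ∧
      Tendsto u₁ (nhdsWithin 1 (Set.Iio 1)) (nhds (Real.pi / 2)) :=
  u11_decreasing_and_limit_general k₀ hk₀ u₁ hmaps hroot
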